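/- arXiv:2202.13476 — 3 statements merged into one kernel-verified Lean document; each statement's English description precedes it below -/
import Mathlib

section
/- Let u₁ and u₂ be twice continuously differentiable solutions on [0,1] of u_i''(s) = α_i M̄'(s) u_i(s)/√(M̄(s)² + u_i(s)²) + u_i'(s) M̄''(s)/M̄'(s) with boundary conditions u_i'(0) = 0 and u_i(1) = 0. Then ∫₀¹ M̄'(s) u₁(s) u₂(s) [α₂/√(M̄(s)² + u₂(s)²) − α₁/√(M̄(s)² + u₁(s)²)] ds + ∫₀¹ (M̄''(s)/M̄'(s)) [u₁(s) u₂'(s) − u₂(s) u₁'(s)] ds = 0. -/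
/-!
Both equations have the form `uᵢ'' = (αᵢ M̄' / √(M̄² + uᵢ²)) uᵢ + (M̄''/M̄') uᵢ'`, so
`u₁ u₂'' - u₂ u₁''`, the derivative of the Wronskian `u₁ u₂' - u₂ u₁'`, equals the sum of
the two integrands. The Wronskian vanishes at `0` (where `u₁' = u₂' = 0`) and at `1`
(where `u₁ = u₂ = 0`), so by the fundamental theorem of calculus the two integrals add up
to zero.
-/

open Set MeasureTheory intervalIntegral

noncomputable def wronskian (u v : ℝ → ℝ) (s : ℝ) : ℝ :=
  u s * deriv v s - v s * deriv u s

theorem hasDerivAt_wronskian {u v : ℝ → ℝ} (hu : ContDiff ℝ 2 u) (hv : ContDiff ℝ 2 v)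
    (s : ℝ) :
    HasDerivAt (wronskian u v) (u s * deriv (deriv v) s - v s * deriv (deriv u) s) s := by
  have h := ((hu.differentiable two_ne_zero s).hasDerivAt.mul
    (hv.differentiable_deriv_two s).hasDerivAt).sub
    ((hv.differentiable two_ne_zero s).hasDerivAt.mul
      (hu.differentiable_deriv_two s).hasDerivAt)
  exact h.congr_deriv (by ring)

theorem continuous_wronskian {u v : ℝ → ℝ} (hu : ContDiff ℝ 2 u) (hv : ContDiff ℝ 2 v) :
    Continuous (wronskian u v) :=
  continuous_iff_continuousAt.2 fun s ↦ (hasDerivAt_wronskian hu hv s).continuousAt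

theorem continuous_deriv_deriv {u : ℝ → ℝ} (hu : ContDiff ℝ 2 u) :
    Continuous (deriv (deriv u)) :=
  (ContDiff.deriv' (n := 1) hu).continuous_deriv_one

theorem continuous_mul_deriv_deriv_sub {u v : ℝ → ℝ} (hu : ContDiff ℝ 2 u)
    (hv : ContDiff ℝ 2 v) :
    Continuous fun s ↦ u s * deriv (deriv v) s - v s * deriv (deriv u) s :=
  (hu.continuous.mul (continuous_deriv_deriv hv)).sub
    (hv.continuous.mul (continuous_deriv_deriv hu))

theorem integral_mul_deriv_deriv_sub {u v : ℝ → ℝ} (hu : ContDiff ℝ 2 u)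
    (hv : ContDiff ℝ 2 v) (a b : ℝ) :
    ∫ s in a..b, (u s * deriv (deriv v) s - v s * deriv (deriv u) s) =
      wronskian u v b - wronskian u v a :=
  integral_eq_sub_of_hasDerivAt (fun s _ ↦ hasDerivAt_wronskian hu hv s)
    ((continuous_mul_deriv_deriv_sub hu hv).intervalIntegrable a b)

theorem integral_add_eq_of_eqOn_uIcc {f g h : ℝ → ℝ} {a b : ℝ}
    (hfg : EqOn h (f + g) (uIcc a b)) (hh : IntervalIntegrable h volume a b)
    (hg : IntervalIntegrable g volume a b) :
    (∫ s in a..b, f s) + ∫ s in a..b, g s = ∫ s in a..b, h s := by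
  have hf : (∫ s in a..b, f s) = ∫ s in a..b, (h s - g s) :=
    integral_congr fun s hs ↦ by simp [hfg hs]
  rw [hf, integral_sub hh hg, sub_add_cancel]

/-- Nonlinear orthogonality relation for solutions of the heterogeneous
helicoseir equation. -/
theorem nonlinear_orthogonality_heterogeneous (M u₁ u₂ : ℝ → ℝ) (α₁ α₂ : ℝ)
    (hM : ContDiff ℝ 2 M) (hM' : ∀ s ∈ Set.Icc (0:ℝ) 1, deriv M s ≠ 0)
    (hu₁ : ContDiff ℝ 2 u₁) (hu₂ : ContDiff ℝ 2 u₂)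
    (hode₁ : ∀ s ∈ Set.Icc (0:ℝ) 1,
      deriv (deriv u₁) s =
        α₁ * deriv M s * u₁ s / Real.sqrt ((M s) ^ 2 + (u₁ s) ^ 2) +
          deriv u₁ s * (deriv (deriv M) s / deriv M s))
    (hode₂ : ∀ s ∈ Set.Icc (0:ℝ) 1,
      deriv (deriv u₂) s =
        α₂ * deriv M s * u₂ s / Real.sqrt ((M s) ^ 2 + (u₂ s) ^ 2) +
          deriv u₂ s * (deriv (deriv M) s / deriv M s))
    (hbc₁ : deriv u₁ 0 = 0) (hbc₁' : u₁ 1 = 0)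
    (hbc₂ : deriv u₂ 0 = 0) (hbc₂' : u₂ 1 = 0) :
    (∫ s in (0:ℝ)..1, deriv M s * u₁ s * u₂ s *
        (α₂ / Real.sqrt ((M s) ^ 2 + (u₂ s) ^ 2) -
          α₁ / Real.sqrt ((M s) ^ 2 + (u₁ s) ^ 2))) +
      (∫ s in (0:ℝ)..1, (deriv (deriv M) s / deriv M s) *
        (u₁ s * deriv u₂ s - u₂ s * deriv u₁ s)) = 0 := by
  have hIcc : uIcc (0:ℝ) 1 = Icc 0 1 := uIcc_of_le zero_le_one
  have hsplit : EqOn (fun s ↦ u₁ s * deriv (deriv u₂) s - u₂ s * deriv (deriv u₁) s)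
      ((fun s ↦ deriv M s * u₁ s * u₂ s *
        (α₂ / Real.sqrt ((M s) ^ 2 + (u₂ s) ^ 2) - α₁ / Real.sqrt ((M s) ^ 2 + (u₁ s) ^ 2))) +
        fun s ↦ (deriv (deriv M) s / deriv M s) * (u₁ s * deriv u₂ s - u₂ s * deriv u₁ s))
      (uIcc 0 1) := by
    intro s hs
    rw [hIcc] at hs
    simp only [Pi.add_apply, hode₁ s hs, hode₂ s hs]
    ring
  have hcoeff : ContinuousOn (fun s ↦ deriv (deriv M) s / deriv M s) (uIcc 0 1) :=
    hIcc ▸ (continuous_deriv_deriv hM).continuousOn.div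
      (hM.continuous_deriv one_le_two).continuousOn hM'
  have hdamping : IntervalIntegrable
      (fun s ↦ (deriv (deriv M) s / deriv M s) * (u₁ s * deriv u₂ s - u₂ s * deriv u₁ s))
      volume 0 1 :=
    (hcoeff.mul (continuous_wronskian hu₁ hu₂).continuousOn).intervalIntegrable
  rw [integral_add_eq_of_eqOn_uIcc hsplit _ hdamping, integral_mul_deriv_deriv_sub hu₁ hu₂]
  · simp [wronskian, hbc₁, hbc₁', hbc₂, hbc₂']
  · exact (continuous_mul_deriv_deriv_sub hu₁ hu₂).intervalIntegrable 0 1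
end

section
/- The solution ũ(s) = √(α(1-s)) · J₁(2√(α(1-s))) of the linearized homogeneous helicoseir equation satisfies the boundary condition ũ'(0) = 0 if and only if J₀(2√α) = 0, i.e. if and only if α = σ_{0,n}²/4 for some n, where σ_{0,n} is a zero of the Bessel function J₀. -/
open Real

/-- Bessel function of the first kind of real order ν, defined by its series. -/
noncomputable def besselJ (ν x : ℝ) : ℝ :=
  ∑' k : ℕ, ((-1 : ℝ) ^ k / ((Nat.factorial k : ℝ) * Real.Gamma (k + ν + 1))) *
    (x / 2) ^ (2 * (k : ℝ) + ν)

open scoped Nat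

/-! The substitution `y = x² / 4` turns `J₀(2√y)` into the entire series `∑ (-1)ᵏ yᵏ / (k!)²` and
`√y J₁(2√y)` into its termwise antiderivative `∑ (-1)ᵏ yᵏ⁺¹ / (k! (k+1)!)`; this is the identity
`d/dx [x J₁(x)] = x J₀(x)` in the variable `y`. Hence `ũ(s) = F(α(1-s))` with `F' = J₀(2√·)`, so
`ũ'(0) = -α J₀(2√α)`, which vanishes iff `J₀(2√α) = 0` since `α > 0`. -/

theorem hasDerivAt_tsum_div_succ_mul_pow {𝕜 : Type*} [RCLike 𝕜] {a : ℕ → 𝕜}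
    (ha : ∀ R : ℝ, Summable fun n => ‖a n‖ * R ^ n) (y : 𝕜) :
    HasDerivAt (fun z => ∑' n, a n / (n + 1) * z ^ (n + 1)) (∑' n, a n * y ^ n) y := by
  set R := ‖y‖ + 1
  refine hasDerivAt_tsum_of_isPreconnected (g := fun n z => a n / (n + 1) * z ^ (n + 1))
    (g' := fun n z => a n * z ^ n) (y₀ := 0) (ha R) Metric.isOpen_ball
    (convex_ball 0 R).isPreconnected (fun n z _ => ?_) (fun n z hz => ?_)
    (Metric.mem_ball_self (by positivity)) ?_ (mem_ball_zero_iff.2 (lt_add_one _))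
  · have h := (hasDerivAt_pow (n + 1) z).const_mul (a n / (n + 1))
    rwa [Nat.add_sub_cancel, Nat.cast_succ, ← mul_assoc,
      div_mul_cancel₀ _ (Nat.cast_add_one_ne_zero n)] at h
  · rw [mem_ball_zero_iff] at hz
    rw [norm_mul, norm_pow]
    gcongr
  · simp

noncomputable def besselJZeroCoeff (k : ℕ) : ℝ := (-1) ^ k / (k ! * k !)

theorem summable_norm_besselJZeroCoeff_mul_pow (R : ℝ) :
    Summable fun n => ‖besselJZeroCoeff n‖ * R ^ n := by
  refine (Real.summable_pow_div_factorial |R|).of_norm_bounded fun n => ?_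
  have h1 : (1 : ℝ) ≤ n ! := by exact_mod_cast n.factorial_pos
  rw [besselJZeroCoeff, norm_mul, norm_norm, norm_div, norm_pow, norm_neg, norm_one, one_pow,
    norm_pow, Real.norm_eq_abs, Real.norm_eq_abs, abs_of_pos (by positivity),
    div_mul_eq_mul_div, one_mul]
  gcongr
  exact le_mul_of_one_le_left (by positivity) h1

theorem besselJ_zero_two_mul_sqrt {y : ℝ} (hy : 0 ≤ y) :
    besselJ 0 (2 * √y) = ∑' k, besselJZeroCoeff k * y ^ k := by
  refine tsum_congr fun k => ?_
  rw [add_zero, Real.Gamma_nat_eq_factorial, mul_div_cancel_left₀ _ two_ne_zero, add_zero,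
    show 2 * (k : ℝ) = ((2 * k : ℕ) : ℝ) by push_cast; ring, Real.rpow_natCast, pow_mul,
    Real.sq_sqrt hy, besselJZeroCoeff]

theorem sqrt_mul_besselJ_one_two_mul_sqrt {y : ℝ} (hy : 0 ≤ y) :
    √y * besselJ 1 (2 * √y) = ∑' k, besselJZeroCoeff k / (k + 1) * y ^ (k + 1) := by
  rw [besselJ, ← tsum_mul_left]
  refine tsum_congr fun k => ?_
  rw [show (k : ℝ) + 1 + 1 = ((k + 1 : ℕ) : ℝ) + 1 by push_cast; ring, Real.Gamma_nat_eq_factorial,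
    mul_div_cancel_left₀ _ two_ne_zero,
    show 2 * (k : ℝ) + 1 = ((2 * k + 1 : ℕ) : ℝ) by push_cast; ring, Real.rpow_natCast,
    pow_succ, pow_mul, Real.sq_sqrt hy, besselJZeroCoeff, Nat.factorial_succ]
  have hsq : √y * √y = y := Real.mul_self_sqrt hy
  push_cast
  rw [mul_left_comm (k ! : ℝ), div_mul_eq_div_div_swap]
  linear_combination (-1) ^ k / (k ! * k !) / (k + 1) * y ^ k * hsq

theorem deriv_sqrt_mul_besselJ_one_at_zero {α : ℝ} (hα : 0 ≤ α) :
    deriv (fun t => √(α * (1 - t)) * besselJ 1 (2 * √(α * (1 - t)))) 0 =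
      -α * besselJ 0 (2 * √α) := by
  have hF := hasDerivAt_tsum_div_succ_mul_pow summable_norm_besselJZeroCoeff_mul_pow α
  have hinner : HasDerivAt (fun t : ℝ => α * (1 - t)) (-α) 0 := by
    simpa using ((hasDerivAt_id (0 : ℝ)).const_sub 1).const_mul α
  have hcomp := hF.comp_of_eq (0 : ℝ) hinner (by ring)
  have heq : (fun t => √(α * (1 - t)) * besselJ 1 (2 * √(α * (1 - t)))) =ᶠ[nhds 0]
      fun t => ∑' k, besselJZeroCoeff k / (k + 1) * (α * (1 - t)) ^ (k + 1) := by
    filter_upwards [eventually_lt_nhds one_pos] with t ht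
    exact sqrt_mul_besselJ_one_two_mul_sqrt (by nlinarith)
  rw [heq.deriv_eq, besselJ_zero_two_mul_sqrt hα]
  exact hcomp.deriv.trans (mul_comm _ _)

theorem besselJ_zero_two_mul_sqrt_eq_zero_iff {α : ℝ} (hα : 0 < α) :
    besselJ 0 (2 * √α) = 0 ↔ ∃ σ : ℝ, 0 < σ ∧ besselJ 0 σ = 0 ∧ α = σ ^ 2 / 4 := by
  refine ⟨fun h => ⟨2 * √α, by positivity, h, ?_⟩, ?_⟩
  · rw [mul_pow, Real.sq_sqrt hα.le]
    ring
  · rintro ⟨σ, hσ, hJ, rfl⟩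
    rwa [show σ ^ 2 / 4 = (σ / 2) ^ 2 by ring, Real.sqrt_sq (by positivity),
      mul_div_cancel₀ _ two_ne_zero]

/-- ũ(s) = √(α(1-s)) J₁(2√(α(1-s))) satisfies ũ'(0) = 0 iff J₀(2√α) = 0,
iff α = σ²/4 for some positive zero σ of J₀. -/
theorem boundary_condition_bessel_zero (α : ℝ) (hα : 0 < α) :
    (deriv (fun t =>
        Real.sqrt (α * (1 - t)) * besselJ 1 (2 * Real.sqrt (α * (1 - t)))) 0 = 0 ↔
      besselJ 0 (2 * Real.sqrt α) = 0) ∧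
    (besselJ 0 (2 * Real.sqrt α) = 0 ↔
      ∃ σ : ℝ, 0 < σ ∧ besselJ 0 σ = 0 ∧ α = σ ^ 2 / 4) := by
  refine ⟨?_, besselJ_zero_two_mul_sqrt_eq_zero_iff hα⟩
  rw [deriv_sqrt_mul_besselJ_one_at_zero hα.le, mul_eq_zero, neg_eq_zero]
  exact or_iff_right hα.ne'
end

section
/- Let u be a C² solution on [0,1] of u''(s) + α u(s)/√((1-s)² + u(s)²) = 0. Suppose a ∈ [0,1) with u'(a) = 0 and u(1) = 0 (taking the node b = 1). Define G(η) = u(a + η(1-a))/(1-a) for η ∈ [0,1]. Then G satisfies G''(η) + α(1-a) G(η)/√((1-η)² + G(η)²) = 0 on [0,1], with G'(0) = 0 and G(1) = 0. In other words, G is a solution of the same homogeneous helicoseir equation with the smaller eigenvalue α(1-a). -/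
/-! Under the substitution s = a + η(1 - a), which maps [0, 1] onto [a, 1] and fixes the node 1,
the second derivative of G acquires a factor 1 - a, while the distance √((1 - s)² + u²) scales
by 1 - a exactly as u does; hence the helicoseir residual of G with eigenvalue α(1 - a) at η is
1 - a times the residual of u with eigenvalue α at s. -/

open Real

noncomputable def helicoseirResidual (α : ℝ) (u : ℝ → ℝ) (s : ℝ) : ℝ :=
  deriv (deriv u) s + α * u s / √((1 - s) ^ 2 + u s ^ 2)

theorem deriv_comp_const_add_mul (f : ℝ → ℝ) (a c η : ℝ) :
    deriv (fun x => f (a + x * c)) η = c * deriv f (a + η * c) := by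
  simp_rw [mul_comm _ c]
  exact (deriv_comp_mul_left (f := fun y => f (a + y)) c η).trans
    (by rw [smul_eq_mul, deriv_comp_const_add])

theorem deriv_rescale (u : ℝ → ℝ) {a c : ℝ} (hc : c ≠ 0) :
    deriv (fun x => u (a + x * c) / c) = fun η => deriv u (a + η * c) := by
  funext η
  rw [deriv_div_const, deriv_comp_const_add_mul, mul_div_cancel_left₀ _ hc]

theorem sqrt_sq_add_div_sq {c : ℝ} (hc : 0 < c) (x y : ℝ) :
    √(x ^ 2 + (y / c) ^ 2) = √((x * c) ^ 2 + y ^ 2) / c := by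
  rw [← sqrt_sq hc.le, ← sqrt_div' _ (by positivity), sqrt_sq hc.le]
  congr 1
  field_simp

theorem helicoseirResidual_rescale (u : ℝ → ℝ) (α η : ℝ) {a : ℝ} (ha : a < 1) :
    helicoseirResidual (α * (1 - a)) (fun x => u (a + x * (1 - a)) / (1 - a)) η =
      (1 - a) * helicoseirResidual α u (a + η * (1 - a)) := by
  have hc : 0 < 1 - a := sub_pos.mpr ha
  have hdist : 1 - (a + η * (1 - a)) = (1 - η) * (1 - a) := by ring
  simp only [helicoseirResidual, deriv_rescale u hc.ne', deriv_comp_const_add_mul,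
    sqrt_sq_add_div_sq hc, hdist]
  rw [div_div_eq_mul_div]
  field_simp

theorem matrioska_homogeneous_endpoint_general (u : ℝ → ℝ) (α : ℝ)
    (hode : ∀ s ∈ Set.Icc (0:ℝ) 1,
      deriv (deriv u) s + α * u s / Real.sqrt ((1 - s) ^ 2 + (u s) ^ 2) = 0)
    (a : ℝ) (ha : a ∈ Set.Ico (0:ℝ) 1)
    (hext : deriv u a = 0) (hnode : u 1 = 0)
    (G : ℝ → ℝ) (hG : ∀ η : ℝ, G η = u (a + η * (1 - a)) / (1 - a)) :
    (∀ η ∈ Set.Icc (0:ℝ) 1,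
      deriv (deriv G) η + (α * (1 - a)) * G η /
        Real.sqrt ((1 - η) ^ 2 + (G η) ^ 2) = 0) ∧
    deriv G 0 = 0 ∧ G 1 = 0 := by
  obtain rfl : G = fun η => u (a + η * (1 - a)) / (1 - a) := funext hG
  obtain ⟨ha₀, ha₁⟩ := ha
  refine ⟨fun η ⟨hη₀, hη₁⟩ => ?_, ?_, ?_⟩
  · have hmem : a + η * (1 - a) ∈ Set.Icc (0:ℝ) 1 := ⟨by nlinarith, by nlinarith⟩
    change helicoseirResidual _ _ η = 0
    rw [helicoseirResidual_rescale u α η ha₁,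
      show helicoseirResidual α u _ = 0 from hode _ hmem, mul_zero]
  · rw [deriv_rescale u (sub_pos.mpr ha₁).ne']
    simpa using hext
  · simp [hnode]

/-- Matrioska theorem, endpoint-node case: if u solves the homogeneous
helicoseir equation with an extremum at a and node at 1, then
G(η) = u(a+η(1-a))/(1-a) solves the same equation with eigenvalue α(1-a). -/
theorem matrioska_homogeneous_endpoint (u : ℝ → ℝ) (α : ℝ) (hα : 0 < α)
    (hu : ContDiff ℝ 2 u)
    (hode : ∀ s ∈ Set.Icc (0:ℝ) 1,
      deriv (deriv u) s + α * u s / Real.sqrt ((1 - s) ^ 2 + (u s) ^ 2) = 0)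
    (a : ℝ) (ha : a ∈ Set.Ico (0:ℝ) 1)
    (hext : deriv u a = 0) (hnode : u 1 = 0)
    (G : ℝ → ℝ) (hG : ∀ η : ℝ, G η = u (a + η * (1 - a)) / (1 - a)) :
    (∀ η ∈ Set.Icc (0:ℝ) 1,
      deriv (deriv G) η + (α * (1 - a)) * G η /
        Real.sqrt ((1 - η) ^ 2 + (G η) ^ 2) = 0) ∧
    deriv G 0 = 0 ∧ G 1 = 0 :=
  matrioska_homogeneous_endpoint_general u α hode a ha hext hnode G hG
end
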